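/- arXiv:2504.03513 — 3 statements merged into one kernel-verified Lean document; each statement's English description precedes it below -/
import Mathlib

section
/- Let (V, dist) be a metric space, let v ∈ V, and let x_0 = v, x_1, …, x_ℓ be a sequence of points with ℓ ≤ β for some integer β ≥ 1, where x_ℓ ∈ C for a finite nonempty set C ⊆ V. Suppose nonnegative reals d(x_0), …, d(x_ℓ) satisfy d(x_ℓ) = 0 and d(x_{i−1}) ≤ 2^{ε/β} · (d(x_i) + w_i) for all i ∈ [ℓ], where w_i := dist(x_{i−1}, x_i), and suppose Σ_{i∈[ℓ]} w_i ≤ 2^ε · dist(v, C) where dist(v, C) := min_{c∈C} dist(v, c). Then d(v) = d(x_0) ≤ 2^{2ε} · dist(v, C). -/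
/-!
Unrolling the relaxation inequality from `d ℓ = 0` back to `d 0` multiplies each edge length by
at most `r ^ ℓ`, where `r = 2 ^ (ε / β) ≥ 1`; as `ℓ ≤ β` this is at most `2 ^ ε`, and the path
being `2 ^ ε`-approximately shortest contributes the second factor `2 ^ ε`.
-/

open Finset

theorem le_pow_mul_sum_of_le_mul_add {α : Type*} [Semiring α] [PartialOrder α] [IsOrderedRing α]
    {r : α} (hr : 1 ≤ r) {ℓ : ℕ} {d w : ℕ → α} (hw : ∀ i, 0 ≤ w i) (hdℓ : d ℓ = 0)
    (hrelax : ∀ i < ℓ, d i ≤ r * (d (i + 1) + w i)) :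
    d 0 ≤ r ^ ℓ * ∑ i ∈ range ℓ, w i := by
  induction ℓ generalizing d w with
  | zero => simp [hdℓ]
  | succ ℓ ih =>
    have htail : d 1 ≤ r ^ ℓ * ∑ i ∈ range ℓ, w (i + 1) :=
      ih (d := fun i => d (i + 1)) (fun i => hw (i + 1)) hdℓ
        fun i hi => hrelax (i + 1) (Nat.succ_lt_succ hi)
    have hw0 : w 0 ≤ r ^ ℓ * w 0 := le_mul_of_one_le_left (hw 0) (one_le_pow₀ hr)
    calc d 0 ≤ r * (d 1 + w 0) := hrelax 0 ℓ.succ_pos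
      _ ≤ r * (r ^ ℓ * ∑ i ∈ range ℓ, w (i + 1) + r ^ ℓ * w 0) := by
          gcongr
          exact zero_le_one.trans hr
      _ = r ^ (ℓ + 1) * ∑ i ∈ range (ℓ + 1), w i := by
          rw [sum_range_succ', pow_succ', mul_add, mul_add, mul_assoc, mul_assoc]

theorem Real.rpow_div_natCast_pow_le_rpow {a ε : ℝ} (ha : 1 ≤ a) (hε : 0 ≤ ε) {ℓ β : ℕ}
    (hℓβ : ℓ ≤ β) : (a ^ (ε / β)) ^ ℓ ≤ a ^ ε := by
  rw [← Real.rpow_mul_natCast (zero_le_one.trans ha), div_mul_eq_mul_div, mul_div_assoc]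
  refine Real.rpow_le_rpow_of_exponent_le ha (mul_le_of_le_one_right hε ?_)
  exact div_le_one_of_le₀ (by exact_mod_cast hℓβ) (Nat.cast_nonneg β)

theorem hop_bounded_relaxation_general {V : Type*} [MetricSpace V]
    (β ℓ : ℕ) (hℓβ : ℓ ≤ β) (ε : ℝ) (hε0 : 0 < ε)
    (C : Finset V) (hC : C.Nonempty) (v : V) (x : ℕ → V)
    (d : ℕ → ℝ) (hdℓ : d ℓ = 0)
    (hrelax : ∀ i < ℓ,
      d i ≤ (2 : ℝ) ^ (ε / (β : ℝ)) * (d (i + 1) + dist (x i) (x (i + 1))))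
    (hpath : ∑ i ∈ Finset.range ℓ, dist (x i) (x (i + 1)) ≤
      (2 : ℝ) ^ ε * (C.inf' hC fun c => dist v c)) :
    d 0 ≤ (2 : ℝ) ^ (2 * ε) * (C.inf' hC fun c => dist v c) := by
  have hstep : 1 ≤ (2 : ℝ) ^ (ε / (β : ℝ)) := Real.one_le_rpow one_le_two (by positivity)
  calc d 0 ≤ ((2 : ℝ) ^ (ε / (β : ℝ))) ^ ℓ * ∑ i ∈ range ℓ, dist (x i) (x (i + 1)) :=
        le_pow_mul_sum_of_le_mul_add hstep (fun _ => dist_nonneg) hdℓ hrelax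
    _ ≤ (2 : ℝ) ^ ε * ∑ i ∈ range ℓ, dist (x i) (x (i + 1)) := by
        gcongr
        exact Real.rpow_div_natCast_pow_le_rpow one_le_two hε0.le hℓβ
    _ ≤ (2 : ℝ) ^ ε * ((2 : ℝ) ^ ε * (C.inf' hC fun c => dist v c)) := by gcongr
    _ = (2 : ℝ) ^ (2 * ε) * (C.inf' hC fun c => dist v c) := by
        rw [← mul_assoc, ← Real.rpow_add two_pos, two_mul]

/-- The edge-relaxation invariant along a hop-bounded approximately-shortest path
from `v` to its nearest center implies the maintained value `d 0` is a
`2^(2ε)`-approximate distance to the center set. -/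
theorem hop_bounded_relaxation {V : Type*} [MetricSpace V]
    (β ℓ : ℕ) (hβ : 1 ≤ β) (hℓβ : ℓ ≤ β) (ε : ℝ) (hε0 : 0 < ε) (hε1 : ε < 1)
    (C : Finset V) (hC : C.Nonempty) (v : V) (x : ℕ → V) (hx0 : x 0 = v)
    (hxℓ : x ℓ ∈ C) (d : ℕ → ℝ) (hd0 : ∀ i, 0 ≤ d i) (hdℓ : d ℓ = 0)
    (hrelax : ∀ i < ℓ,
      d i ≤ (2 : ℝ) ^ (ε / (β : ℝ)) * (d (i + 1) + dist (x i) (x (i + 1))))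
    (hpath : ∑ i ∈ Finset.range ℓ, dist (x i) (x (i + 1)) ≤
      (2 : ℝ) ^ ε * (C.inf' hC fun c => dist v c)) :
    d 0 ≤ (2 : ℝ) ^ (2 * ε) * (C.inf' hC fun c => dist v c) :=
  hop_bounded_relaxation_general β ℓ hℓβ ε hε0 C hC v x d hdℓ hrelax hpath
end

section
/- Let n ≥ 2, z ≥ 1, ε ∈ (0,1), and let m, J ≥ 1 be integers. Let (cost_i)_{i=0}^{ℓ} be positive reals with cost_0 ≤ n^{z+1} · cost_ℓ, and suppose for every i ∈ [ℓ] there is a real v_i with 1/(2mJ) ≤ v_i ≤ 1 and cost_i ≤ (1 − (ε/2)·v_i) · cost_{i−1}. Then ℓ ≤ ⌈8 z ε^{−1} m J · ln n⌉. -/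
/-!
Each improving swap shrinks the cost by a factor `1 - (ε/2)·vᵢ ≤ 1 - δ` with `δ = ε / (4mJ)`,
and `1 - δ ≤ e^{-δ}`, so after `ℓ` swaps the cost has dropped by at least `e^{δℓ}`. Since the
total drop is at most `n^(z+1)`, this gives `δℓ ≤ (z+1) log n ≤ 2z log n`.
-/

open Real

theorem mul_le_log_of_le_one_sub_mul {c : ℕ → ℝ} {δ A : ℝ} {ℓ : ℕ}
    (hc : ∀ i ≤ ℓ, 0 < c i) (hstep : ∀ i < ℓ, c (i + 1) ≤ (1 - δ) * c i)
    (hA : c 0 ≤ A * c ℓ) : δ * ℓ ≤ log A := by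
  have hdecay : c ℓ ≤ exp (-δ) ^ ℓ * c 0 := le_geom (exp_pos _).le ℓ fun i hi =>
    (hstep i hi).trans (mul_le_mul_of_nonneg_right (one_sub_le_exp_neg δ) (hc i hi.le).le)
  have hcℓ := hc ℓ le_rfl
  have hexp : exp (δ * ℓ) * c ℓ ≤ A * c ℓ :=
    calc exp (δ * ℓ) * c ℓ ≤ exp (δ * ℓ) * (exp (-δ) ^ ℓ * c 0) := by gcongr
      _ = c 0 := by rw [← exp_nat_mul, ← mul_assoc, ← exp_add]; simp [mul_comm]
      _ ≤ A * c ℓ := hA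
  have hexpA := le_of_mul_le_mul_right hexp hcℓ
  exact (le_log_iff_exp_le ((exp_pos _).trans_le hexpA)).2 hexpA

theorem iteration_count_bound_general (n : ℕ) (hn : 2 ≤ n) (z : ℝ) (hz : 1 ≤ z)
    (ε : ℝ) (hε0 : 0 < ε) (m J : ℕ) (hm : 1 ≤ m) (hJ : 1 ≤ J)
    (ℓ : ℕ) (cost : ℕ → ℝ) (hpos : ∀ i ≤ ℓ, 0 < cost i)
    (hfirst : cost 0 ≤ (n : ℝ) ^ (z + 1) * cost ℓ)
    (v : ℕ → ℝ)
    (hv : ∀ i < ℓ, (1 / (2 * (m : ℝ) * (J : ℝ))) ≤ v (i + 1) ∧ v (i + 1) ≤ 1 ∧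
      cost (i + 1) ≤ (1 - (ε / 2) * v (i + 1)) * cost i) :
    (ℓ : ℝ) ≤ ((⌈8 * z * ε⁻¹ * (m : ℝ) * (J : ℝ) * Real.log n⌉ : ℤ) : ℝ) := by
  have hmJ : (0 : ℝ) < m * J := by positivity
  have hn1 : (1 : ℝ) < n := by exact_mod_cast hn
  have hstep : ∀ i < ℓ, cost (i + 1) ≤ (1 - ε / (4 * m * J)) * cost i := by
    intro i hi
    obtain ⟨hvi, -, hcost⟩ := hv i hi
    have hδ : ε / (4 * m * J) ≤ ε / 2 * v (i + 1) :=
      calc ε / (4 * m * J) = ε / 2 * (1 / (2 * m * J)) := by field_simp; ring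
        _ ≤ ε / 2 * v (i + 1) := by gcongr
    exact hcost.trans (by gcongr; exact (hpos i hi.le).le)
  have hlog := mul_le_log_of_le_one_sub_mul hpos hstep hfirst
  rw [log_rpow (by linarith)] at hlog
  have hlogn : 0 ≤ log n := (log_pos hn1).le
  refine le_trans ?_ (Int.le_ceil _)
  calc (ℓ : ℝ) = ε / (4 * m * J) * ℓ * (4 * m * J / ε) := by field_simp
    _ ≤ (z + 1) * log n * (4 * m * J / ε) := by gcongr
    _ ≤ 2 * z * log n * (4 * m * J / ε) := by gcongr; linarith
    _ = 8 * z * ε⁻¹ * m * J * log n := by field_simp; ring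

/-- Bound on the number of improving iterations of the local search: each swap
multiplies the objective by at most `1 − (ε/2)·vᵢ` with `1/(2mJ) ≤ vᵢ ≤ 1`,
and the total decrease is bounded by the initial approximation factor `n^(z+1)`. -/
theorem iteration_count_bound (n : ℕ) (hn : 2 ≤ n) (z : ℝ) (hz : 1 ≤ z)
    (ε : ℝ) (hε0 : 0 < ε) (hε1 : ε < 1) (m J : ℕ) (hm : 1 ≤ m) (hJ : 1 ≤ J)
    (ℓ : ℕ) (cost : ℕ → ℝ) (hpos : ∀ i ≤ ℓ, 0 < cost i)
    (hfirst : cost 0 ≤ (n : ℝ) ^ (z + 1) * cost ℓ)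
    (v : ℕ → ℝ)
    (hv : ∀ i < ℓ, (1 / (2 * (m : ℝ) * (J : ℝ))) ≤ v (i + 1) ∧ v (i + 1) ≤ 1 ∧
      cost (i + 1) ≤ (1 - (ε / 2) * v (i + 1)) * cost i) :
    (ℓ : ℝ) ≤ ((⌈8 * z * ε⁻¹ * (m : ℝ) * (J : ℝ) * Real.log n⌉ : ℤ) : ℝ) :=
  iteration_count_bound_general n hn z hz ε hε0 m J hm hJ ℓ cost hpos hfirst v hv
end

section
/- Let z ≥ 1, ε ∈ (0,1), let (a_v)_{v∈V} be nonnegative reals indexed by a finite set V with |V| = n ≥ 1, and let b ≥ 0 satisfy n · (1 + 3z/ε)^{z−1} · (n·b)^z ≤ (ε/3) · Σ_{v∈V} a_v^z (assuming the sum is positive). Then Σ_{v∈V} (a_v + n·b)^z ≤ 2^ε · Σ_{v∈V} a_v^z. -/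
/-!
Split each term by the generalized triangle inequality
`(a + B)^z ≤ (1 + λ)^{z-1} a^z + (1 + 1/λ)^{z-1} B^z` with `λ = ε/(3z)`.
The first factor is at most `exp(λ(z-1)) ≤ exp(ε/3)`, the `n` error terms together are at most
`(ε/3) Σ a^z` by hypothesis, and `exp(ε/3) + ε/3 ≤ 2^ε` because `log 2 > 2/3`.
-/

open Real Finset

namespace Real

/-- Convexity of `t ↦ t^z` at the points `p x` and `q y` with weights `p⁻¹` and `q⁻¹`. -/
theorem add_rpow_le_rpow_sub_one_mul_add {p q x y z : ℝ} (hp : 0 < p) (hq : 0 < q)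
    (hpq : p⁻¹ + q⁻¹ = 1) (hx : 0 ≤ x) (hy : 0 ≤ y) (hz : 1 ≤ z) :
    (x + y) ^ z ≤ p ^ (z - 1) * x ^ z + q ^ (z - 1) * y ^ z := by
  have hconv := (convexOn_rpow hz).2 (Set.mem_Ici.2 (by positivity : 0 ≤ p * x))
    (Set.mem_Ici.2 (by positivity : 0 ≤ q * y)) (by positivity) (by positivity) hpq
  have hsum : p⁻¹ • (p * x) + q⁻¹ • (q * y) = x + y := by
    simp only [smul_eq_mul, inv_mul_cancel_left₀ hp.ne', inv_mul_cancel_left₀ hq.ne']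
  have hweight {r t : ℝ} (hr : 0 < r) (ht : 0 ≤ t) : r⁻¹ • (r * t) ^ z = r ^ (z - 1) * t ^ z := by
    rw [smul_eq_mul, mul_rpow hr.le ht, rpow_sub_one hr.ne']
    field_simp
  rwa [hsum, hweight hp hx, hweight hq hy] at hconv

theorem one_add_div_rpow_sub_one_le_exp {c z : ℝ} (hc : 0 ≤ c) (hz : 1 ≤ z) :
    (1 + c / z) ^ (z - 1) ≤ exp c := by
  have hcz : 0 ≤ c / z := div_nonneg hc (by linarith)
  calc (1 + c / z) ^ (z - 1) ≤ exp (c / z) ^ (z - 1) :=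
        rpow_le_rpow (by linarith) (by linarith [add_one_le_exp (c / z)]) (by linarith)
    _ = exp (c - c / z) := by
        rw [← exp_mul]
        congr 1
        field_simp
    _ ≤ exp c := by
        gcongr
        linarith

theorem exp_div_three_add_div_three_le_two_rpow {ε : ℝ} (hε : 0 ≤ ε) :
    exp (ε / 3) + ε / 3 ≤ 2 ^ ε := by
  have hlog : 2 / 3 < log 2 := by linarith [log_two_gt_d9]
  have hexp : 1 ≤ exp (ε / 3) := one_le_exp (by positivity)
  have hgap : ε / 3 ≤ ε * (log 2 - 1 / 3) := by nlinarith
  calc exp (ε / 3) + ε / 3 ≤ exp (ε / 3) * (1 + ε * (log 2 - 1 / 3)) := by nlinarith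
    _ ≤ exp (ε / 3) * exp (ε * (log 2 - 1 / 3)) := by
        gcongr
        linarith [add_one_le_exp (ε * (log 2 - 1 / 3))]
    _ = 2 ^ ε := by
        rw [← exp_add, rpow_def_of_pos two_pos]
        ring_nf

end Real

theorem weight_perturbation_general {α : Type*} (V : Finset α) (n : ℕ)
    (hn : V.card = n)
    (z ε : ℝ) (hz : 1 ≤ z) (hε0 : 0 < ε)
    (a : α → ℝ) (ha : ∀ v ∈ V, 0 ≤ a v) (b : ℝ) (hb : 0 ≤ b)
    (hsmall : (n : ℝ) * (1 + 3 * z / ε) ^ (z - 1) * ((n : ℝ) * b) ^ z ≤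
      (ε / 3) * ∑ v ∈ V, a v ^ z) :
    ∑ v ∈ V, (a v + (n : ℝ) * b) ^ z ≤ (2 : ℝ) ^ ε * ∑ v ∈ V, a v ^ z := by
  set S := ∑ v ∈ V, a v ^ z
  have hS : 0 ≤ S := sum_nonneg fun v hv => rpow_nonneg (ha v hv) z
  have hconj : (1 + ε / 3 / z)⁻¹ + (1 + 3 * z / ε)⁻¹ = 1 := by
    field_simp
    ring
  calc ∑ v ∈ V, (a v + n * b) ^ z
      ≤ ∑ v ∈ V, ((1 + ε / 3 / z) ^ (z - 1) * a v ^ z +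
          (1 + 3 * z / ε) ^ (z - 1) * (n * b) ^ z) :=
        sum_le_sum fun v hv => add_rpow_le_rpow_sub_one_mul_add (by positivity) (by positivity)
          hconj (ha v hv) (by positivity) hz
    _ = (1 + ε / 3 / z) ^ (z - 1) * S + n * (1 + 3 * z / ε) ^ (z - 1) * (n * b) ^ z := by
        rw [sum_add_distrib, ← mul_sum, sum_const, hn, nsmul_eq_mul, mul_assoc]
    _ ≤ exp (ε / 3) * S + ε / 3 * S :=
        add_le_add (mul_le_mul_of_nonneg_right
          (one_add_div_rpow_sub_one_le_exp (by positivity) hz) hS) hsmall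
    _ ≤ 2 ^ ε * S := by
        rw [← add_mul]
        exact mul_le_mul_of_nonneg_right (exp_div_three_add_div_three_le_two_rpow hε0.le) hS

/-- Perturbation bound: if the uniform additive distortion `n·b` is small enough
relative to the cost `Σ a_v^z`, then perturbing every distance by `n·b` changes
the cost by at most a factor `2^ε`. -/
theorem weight_perturbation {α : Type*} (V : Finset α) (n : ℕ)
    (hn : V.card = n) (h1 : 1 ≤ n)
    (z ε : ℝ) (hz : 1 ≤ z) (hε0 : 0 < ε) (hε1 : ε < 1)
    (a : α → ℝ) (ha : ∀ v ∈ V, 0 ≤ a v) (b : ℝ) (hb : 0 ≤ b)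
    (hsum : 0 < ∑ v ∈ V, a v ^ z)
    (hsmall : (n : ℝ) * (1 + 3 * z / ε) ^ (z - 1) * ((n : ℝ) * b) ^ z ≤
      (ε / 3) * ∑ v ∈ V, a v ^ z) :
    ∑ v ∈ V, (a v + (n : ℝ) * b) ^ z ≤ (2 : ℝ) ^ ε * ∑ v ∈ V, a v ^ z :=
  weight_perturbation_general V n hn z ε hz hε0 a ha b hb hsmall
end
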